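/- arXiv:2305.20023 — 3 statements merged into one kernel-verified Lean document; each statement's English description precedes it below -/
import Mathlib

section
/- Let L > 0, let a : ℝ → ℝ be an L-periodic continuous function with magnetic flux α = (1/(2π))∫₀^L a(x)dx, and let k(α) be defined by: k(α) = 1/|sin(2πα)| if α mod 1 ∈ (0,1/4) ∪ (3/4,1), and k(α) = 1 if α mod 1 ∈ [1/4,3/4]. Suppose α ∉ ℤ. Then for every L-periodic function u ∈ H¹ one has ‖u‖_∞² ≤ k(α) · (∫₀^L |i u'(x) − a(x)u(x)|² dx)^{1/2} · (∫₀^L |u(x)|² dx)^{1/2}. -/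
open MeasureTheory Real Filter

/-- The constant `k(α)` from (K1): `1/|sin(2πα)|` when `α mod 1 ∈ (0,1/4)∪(3/4,1)`,
and `1` when `α mod 1 ∈ [1/4,3/4]`. -/
noncomputable def kConst (α : ℝ) : ℝ :=
  if 1/4 ≤ Int.fract α ∧ Int.fract α ≤ 3/4 then 1
  else 1 / |Real.sin (2 * Real.pi * α)|

/-- `F(b,α) = b^{5/3} Σ_{k∈ℤ} (|k+α|³+b)^{-2}`. -/
noncomputable def Fsum (α b : ℝ) : ℝ :=
  b ^ ((5:ℝ)/3) * ∑' k : ℤ, ((|(k : ℝ) + α| ^ 3 + b) ^ 2)⁻¹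

/-- `sup_{b ≥ 0} F(b,α)`. -/
noncomputable def supF (α : ℝ) : ℝ := ⨆ b : {x : ℝ // 0 ≤ x}, Fsum α b.1

/-- The constant `K₂(α)`. -/
noncomputable def K2 (α : ℝ) : ℝ :=
  5 / (3 * Real.sqrt 3 * Real.pi) * (supF α) ^ 2

/-- `K(α) = min(K₁(α), K₂(α))` with `K₁(α) = k(α)²`. -/
noncomputable def Kmin (α : ℝ) : ℝ := min ((kConst α) ^ 2) (K2 α)

/-!
Gauge the potential away: with `ψ t = ∫₀ᵗ a`, the function `v = e^{iψ} u` has `|v| = |u|` and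
`|v'| = |i u' - a u|`, and it is quasi-periodic, `v (t + L) = e^{iβ} v t` with `β = 2πα`.
For `τ > 0`, integrating by parts against the Green function `G` of `-d²/dt² + τ²` with this
quasi-periodicity writes `conj (v x)` as a pairing of `(v', τ v)` with `(G', τ G)`, so by
Cauchy–Schwarz `|v x|² ≤ (D + τ² B) · G 0`, where `D = ∫ |i u' - a u|²` and `B = ∫ |u|²`.
Here `2τ · G 0` is the Poisson kernel `(1 - q²) / |e^{iβ} - q|²` at `q = e^{-τL}`, which is at most
`1` when `cos β ≤ 0` and at most `1 / |sin β|` always, hence at most `k(α)`. Minimising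
`(D + τ² B) / (2τ)` over `τ > 0` gives `√D √B`.
-/

open Topology ComplexConjugate

lemma le_sqrt_mul_sqrt_of_forall_pos {x a b : ℝ} (ha : 0 ≤ a) (hb : 0 ≤ b)
    (h : ∀ t, 0 < t → x ≤ (t * a + b / t) / 2) : x ≤ √a * √b := by
  have hlim : Tendsto (fun ε => √a * √b + ε * (√a + √b) / 2) (𝓝[>] 0) (𝓝 (√a * √b)) :=
    tendsto_nhdsWithin_of_tendsto_nhds <| Continuous.tendsto' (by fun_prop) 0 _ (by simp)
  refine ge_of_tendsto hlim (eventually_nhdsWithin_of_forall fun ε (hε : 0 < ε) => ?_)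
  obtain ⟨p, hp, rfl⟩ : ∃ p, 0 ≤ p ∧ a = p ^ 2 := ⟨√a, sqrt_nonneg a, (sq_sqrt ha).symm⟩
  obtain ⟨r, hr, rfl⟩ : ∃ r, 0 ≤ r ∧ b = r ^ 2 := ⟨√b, sqrt_nonneg b, (sq_sqrt hb).symm⟩
  rw [sqrt_sq hp, sqrt_sq hr]
  -- `t = (√b + ε) / (√a + ε)` tends to the minimiser `√b / √a` as `ε → 0`
  have h₁ : (r + ε) / (p + ε) * p ^ 2 ≤ (r + ε) * p := by
    rw [div_mul_eq_mul_div, div_le_iff₀ (by positivity)]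
    nlinarith [mul_nonneg (add_nonneg hr hε.le) (mul_nonneg hp hε.le)]
  have h₂ : r ^ 2 / ((r + ε) / (p + ε)) ≤ r * (p + ε) := by
    rw [div_div_eq_mul_div, div_le_iff₀ (by positivity)]
    nlinarith [mul_nonneg (add_nonneg hp hε.le) (mul_nonneg hr hε.le)]
  linarith [h ((r + ε) / (p + ε)) (by positivity)]

lemma sq_iSup_le_of_forall_sq_le {ι : Type*} {f : ι → ℝ} {C : ℝ} (hf : ∀ i, 0 ≤ f i) (hC : 0 ≤ C)
    (h : ∀ i, f i ^ 2 ≤ C) : (⨆ i, f i) ^ 2 ≤ C := by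
  calc (⨆ i, f i) ^ 2 ≤ √C ^ 2 := pow_le_pow_left₀ (Real.iSup_nonneg hf)
        (Real.iSup_le (fun i => le_sqrt_of_sq_le (h i)) (sqrt_nonneg C)) 2
    _ = C := sq_sqrt hC

open Complex in
lemma poissonKernel_zero_ofReal_exp_mul_I (q β : ℝ) :
    poissonKernel 0 q (exp (β * I)) = (1 - q ^ 2) / (1 - 2 * q * Real.cos β + q ^ 2) := by
  have h : ‖exp (β * I) - q‖ ^ 2 = 1 - 2 * q * Real.cos β + q ^ 2 := by
    rw [Complex.sq_norm, Complex.normSq_apply]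
    simp only [sub_re, sub_im, exp_ofReal_mul_I_re, exp_ofReal_mul_I_im, ofReal_re, ofReal_im]
    nlinarith [Real.sin_sq_add_cos_sq β]
  rw [poissonKernel_def]; simp only [sub_zero]
  rw [h, norm_exp_ofReal_mul_I, Complex.norm_real, Real.norm_eq_abs, sq_abs, one_pow]

lemma poissonKernel_le_one {q β : ℝ} (hq : 0 ≤ q) (hβ : cos β ≤ 0) :
    poissonKernel 0 q (Complex.exp (β * Complex.I)) ≤ 1 := by
  rw [poissonKernel_zero_ofReal_exp_mul_I, div_le_one (by nlinarith)]
  nlinarith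

lemma poissonKernel_le_one_div_abs_sin {q β : ℝ} (hβ : sin β ≠ 0) :
    poissonKernel 0 q (Complex.exp (β * Complex.I)) ≤ 1 / |sin β| := by
  have hsc := sin_sq_add_cos_sq β
  have hsq : |sin β| ^ 2 = sin β ^ 2 := sq_abs _
  have hden : 0 < 1 - 2 * q * cos β + q ^ 2 := by
    nlinarith [sq_nonneg (q - cos β), pow_pos (abs_pos.mpr hβ) 2]
  rw [poissonKernel_zero_ofReal_exp_mul_I, div_le_div_iff₀ hden (abs_pos.mpr hβ), one_mul]
  -- as a quadratic in `q` the difference has discriminant `4 (cos² β + sin² β - 1) = 0`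
  nlinarith [sq_nonneg ((1 + |sin β|) * q - cos β), abs_nonneg (sin β), abs_sin_le_one β]

lemma cos_two_pi_mul_nonpos {α : ℝ} (h₁ : 1 / 4 ≤ Int.fract α) (h₂ : Int.fract α ≤ 3 / 4) :
    cos (2 * π * α) ≤ 0 := by
  have : 2 * π * α = 2 * π * Int.fract α + ⌊α⌋ * (2 * π) := by
    rw [Int.fract]; ring
  rw [this, cos_add_int_mul_two_pi]
  apply cos_nonpos_of_pi_div_two_le_of_le <;> nlinarith [pi_pos]

lemma sin_two_pi_mul_ne_zero {α : ℝ} (hα : ∀ m : ℤ, α ≠ m) (hf : Int.fract α ≠ 1 / 2) :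
    sin (2 * π * α) ≠ 0 := by
  intro h
  obtain ⟨n, hn⟩ := sin_eq_zero_iff.mp h
  obtain ⟨k, rfl | rfl⟩ := Int.even_or_odd' n
  · exact hα k (by push_cast at hn; nlinarith [pi_pos])
  · apply hf
    have : α = k + 1 / 2 := by push_cast at hn; nlinarith [pi_pos]
    rw [this, Int.fract_intCast_add]
    norm_num

lemma kConst_nonneg (α : ℝ) : 0 ≤ kConst α := by
  unfold kConst
  split_ifs <;> positivity

lemma poissonKernel_le_kConst {α q : ℝ} (hα : ∀ m : ℤ, α ≠ m) (hq : 0 ≤ q) :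
    poissonKernel 0 q (Complex.exp ((2 * π * α : ℝ) * Complex.I)) ≤ kConst α := by
  unfold kConst
  split_ifs with hf
  · exact poissonKernel_le_one hq (cos_two_pi_mul_nonpos hf.1 hf.2)
  · refine poissonKernel_le_one_div_abs_sin (sin_two_pi_mul_ne_zero hα fun h => hf ?_)
    rw [h]; norm_num

open Complex in
lemma conj_exp_ofReal_mul_I (β : ℝ) : conj (exp (β * I)) = exp (-(β * I)) := by
  rw [← Complex.exp_conj, map_mul, conj_ofReal, conj_I, mul_neg]

lemma norm_conj_mul_add_mul_le (a b c d : ℂ) {τ r : ℝ} (hr : 0 < r) :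
    ‖conj a * b + τ ^ 2 * (conj c * d)‖ ≤
      (r * (‖a‖ ^ 2 + τ ^ 2 * ‖c‖ ^ 2) + (‖b‖ ^ 2 + τ ^ 2 * ‖d‖ ^ 2) / r) / 2 := by
  have amgm : ∀ x y : ℝ, x * y ≤ (r * x ^ 2 + y ^ 2 / r) / 2 := fun x y => by
    rw [le_div_iff₀ two_pos, add_div' _ _ _ hr.ne', le_div_iff₀ hr]
    nlinarith [sq_nonneg (r * x - y)]
  calc ‖conj a * b + τ ^ 2 * (conj c * d)‖ ≤ ‖a‖ * ‖b‖ + τ ^ 2 * (‖c‖ * ‖d‖) := by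
        refine (norm_add_le _ _).trans_eq ?_
        rw [norm_mul, norm_mul, norm_mul, RCLike.norm_conj, RCLike.norm_conj, norm_pow,
          Complex.norm_real, Real.norm_eq_abs, sq_abs]
    _ ≤ (r * ‖a‖ ^ 2 + ‖b‖ ^ 2 / r) / 2 + τ ^ 2 * ((r * ‖c‖ ^ 2 + ‖d‖ ^ 2 / r) / 2) :=
        add_le_add (amgm _ _) (mul_le_mul_of_nonneg_left (amgm _ _) (sq_nonneg τ))
    _ = _ := by ring

section Green

open Complex

variable (L τ β : ℝ)

-- Determined by `G'' = τ² G`, `G L = e^{iβ} G 0` and the unit jump `e^{-iβ} G' L - G' 0 = 1`.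
noncomputable def greenFun (t : ℝ) : ℂ :=
  (Real.exp (-(τ * t)) / (1 - exp (-(β * I)) * Real.exp (-(τ * L))) +
    Real.exp (-(τ * (L - t))) / (exp (-(β * I)) - Real.exp (-(τ * L)))) / (2 * τ)

noncomputable def greenFunDeriv (t : ℝ) : ℂ :=
  τ * (Real.exp (-(τ * (L - t))) / (exp (-(β * I)) - Real.exp (-(τ * L))) -
    Real.exp (-(τ * t)) / (1 - exp (-(β * I)) * Real.exp (-(τ * L)))) / (2 * τ)

variable {L τ β}

lemma hasDerivAt_ofReal_exp_neg_mul (t : ℝ) :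
    HasDerivAt (fun t : ℝ => (Real.exp (-(τ * t)) : ℂ)) (-τ * Real.exp (-(τ * t))) t := by
  have := ((hasDerivAt_id t).const_mul τ).neg.exp
  simp only [id, mul_one, Pi.neg_apply] at this
  exact_mod_cast this.ofReal_comp.congr_deriv (by push_cast; ring)

lemma hasDerivAt_ofReal_exp_neg_mul_sub (t : ℝ) :
    HasDerivAt (fun t : ℝ => (Real.exp (-(τ * (L - t))) : ℂ))
      (τ * Real.exp (-(τ * (L - t)))) t := by
  have := (((hasDerivAt_id t).const_sub L).const_mul τ).neg.exp
  simp only [id, Pi.neg_apply] at this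
  exact_mod_cast this.ofReal_comp.congr_deriv (by push_cast; ring)

lemma hasDerivAt_greenFun (t : ℝ) : HasDerivAt (greenFun L τ β) (greenFunDeriv L τ β t) t := by
  refine ((((hasDerivAt_ofReal_exp_neg_mul t).div_const _).add
    ((hasDerivAt_ofReal_exp_neg_mul_sub t).div_const _)).div_const _).congr_deriv ?_
  simp only [greenFunDeriv]
  ring

lemma hasDerivAt_greenFunDeriv (t : ℝ) :
    HasDerivAt (greenFunDeriv L τ β) (τ ^ 2 * greenFun L τ β t) t := by
  refine (((((hasDerivAt_ofReal_exp_neg_mul_sub t).div_const _).sub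
    ((hasDerivAt_ofReal_exp_neg_mul t).div_const _)).const_mul _).div_const _).congr_deriv ?_
  simp only [greenFun]
  ring

@[fun_prop]
lemma continuous_greenFun : Continuous (greenFun L τ β) :=
  continuous_iff_continuousAt.mpr fun t => (hasDerivAt_greenFun t).continuousAt

@[fun_prop]
lemma continuous_greenFunDeriv : Continuous (greenFunDeriv L τ β) :=
  continuous_iff_continuousAt.mpr fun t => (hasDerivAt_greenFunDeriv t).continuousAt

variable (hL : 0 < L) (hτ : 0 < τ)
include hL hτ

lemma greenFun_denominators_ne_zero :
    1 - exp (-(β * I)) * Real.exp (-(τ * L)) ≠ 0 ∧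
      (exp (-(β * I)) - Real.exp (-(τ * L))) ≠ 0 ∧ (τ : ℂ) ≠ 0 := by
  have hq : Real.exp (-(τ * L)) < 1 := Real.exp_lt_one_iff.mpr (by nlinarith)
  have hw : ‖exp (-(β * I))‖ = 1 := by
    rw [← neg_mul, ← ofReal_neg]; exact norm_exp_ofReal_mul_I _
  refine ⟨fun h => ?_, fun h => ?_, ofReal_ne_zero.mpr hτ.ne'⟩
  · have := congrArg norm (sub_eq_zero.mp h).symm
    rw [norm_mul, hw, one_mul, norm_one, norm_real, Real.norm_of_nonneg (Real.exp_pos _).le] at this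
    linarith
  · have := congrArg norm (sub_eq_zero.mp h)
    rw [hw, norm_real, Real.norm_of_nonneg (Real.exp_pos _).le] at this
    linarith

lemma greenFun_period : greenFun L τ β L = exp (β * I) * greenFun L τ β 0 := by
  obtain ⟨h₁, h₂, hτ'⟩ := greenFun_denominators_ne_zero hL hτ (β := β)
  have hEw : exp (β * I) * exp (-(β * I)) = 1 := by rw [← Complex.exp_add]; simp
  simp only [greenFun, mul_zero, neg_zero, Real.exp_zero, sub_zero, sub_self, ofReal_one]
  generalize (Real.exp (-(τ * L)) : ℂ) = q at *
  generalize exp (β * I) = E at *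
  generalize exp (-(β * I)) = w at *
  rw [mul_comm] at h₁
  field_simp
  linear_combination (q ^ 2 - 1) * hEw

lemma greenFunDeriv_jump :
    exp (-(β * I)) * greenFunDeriv L τ β L - greenFunDeriv L τ β 0 = 1 := by
  obtain ⟨h₁, h₂, hτ'⟩ := greenFun_denominators_ne_zero hL hτ (β := β)
  simp only [greenFunDeriv, mul_zero, neg_zero, Real.exp_zero, sub_zero, sub_self, ofReal_one]
  generalize (Real.exp (-(τ * L)) : ℂ) = q at *
  field_simp
  ring

lemma greenFun_zero :
    greenFun L τ β 0 =
      ((poissonKernel 0 (Real.exp (-(τ * L))) (exp (β * I)) / (2 * τ) : ℝ) : ℂ) := by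
  obtain ⟨h₁, h₂, hτ'⟩ := greenFun_denominators_ne_zero hL hτ (β := β)
  have hEw : exp (β * I) * exp (-(β * I)) = 1 := by rw [← Complex.exp_add]; simp
  have hnorm : ((‖exp (β * I) - Real.exp (-(τ * L))‖ ^ 2 : ℝ) : ℂ) =
      (exp (β * I) - Real.exp (-(τ * L))) * (exp (-(β * I)) - Real.exp (-(τ * L))) := by
    rw [ofReal_pow, ← mul_conj', map_sub, conj_exp_ofReal_mul_I, conj_ofReal]
  rw [poissonKernel_def]
  simp only [sub_zero, norm_exp_ofReal_mul_I, norm_real, Real.norm_eq_abs, sq_abs, one_pow]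
  rw [ofReal_div, ofReal_div, hnorm]
  simp only [greenFun, mul_zero, neg_zero, Real.exp_zero, sub_zero, ofReal_one, ofReal_sub,
    ofReal_pow, ofReal_mul, ofReal_ofNat]
  generalize (Real.exp (-(τ * L)) : ℂ) = q at *
  generalize exp (β * I) = E at *
  generalize exp (-(β * I)) = w at *
  have h₃ : E - q ≠ 0 := fun h => h₁ (by linear_combination w * h - hEw)
  field_simp
  linear_combination (1 - q ^ 2) * hEw

lemma integral_conj_mul_greenFunDeriv_add {v v' : ℝ → ℂ} (hv : ∀ t, HasDerivAt v (v' t) t)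
    (hv' : Continuous v') (hvL : v L = exp (β * I) * v 0) :
    ∫ t in (0:ℝ)..L, (conj (v' t) * greenFunDeriv L τ β t + τ ^ 2 * (conj (v t) * greenFun L τ β t))
      = conj (v 0) := by
  have hvc : Continuous v := continuous_iff_continuousAt.mpr fun t => (hv t).continuousAt
  have hderiv : ∀ t ∈ Set.uIcc 0 L, HasDerivAt (fun s => conj (v s) * greenFunDeriv L τ β s)
      (conj (v' t) * greenFunDeriv L τ β t + τ ^ 2 * (conj (v t) * greenFun L τ β t)) t :=
    fun t _ => ((hv t).star.mul (hasDerivAt_greenFunDeriv t)).congr_deriv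
      (by simp only [Complex.star_def]; ring)
  rw [intervalIntegral.integral_eq_sub_of_hasDerivAt hderiv (Continuous.intervalIntegrable
    (by fun_prop) _ _), hvL, map_mul, conj_exp_ofReal_mul_I]
  linear_combination conj (v 0) * greenFunDeriv_jump hL hτ

lemma integral_norm_greenFunDeriv_sq_add :
    ∫ t in (0:ℝ)..L, (‖greenFunDeriv L τ β t‖ ^ 2 + τ ^ 2 * ‖greenFun L τ β t‖ ^ 2) =
      poissonKernel 0 (Real.exp (-(τ * L))) (exp (β * I)) / (2 * τ) := by
  have h := integral_conj_mul_greenFunDeriv_add hL hτ hasDerivAt_greenFun continuous_greenFunDeriv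
    (greenFun_period hL hτ (β := β))
  simp only [conj_mul', greenFun_zero hL hτ, conj_ofReal] at h
  rw [← ofReal_inj, ← h, ← intervalIntegral.integral_ofReal]
  simp

lemma norm_sq_zero_le_energy_mul_poissonKernel {v v' : ℝ → ℂ} (hv : ∀ t, HasDerivAt v (v' t) t)
    (hv' : Continuous v') (hvL : v L = exp (β * I) * v 0) :
    ‖v 0‖ ^ 2 ≤ (∫ t in (0:ℝ)..L, (‖v' t‖ ^ 2 + τ ^ 2 * ‖v t‖ ^ 2)) *
      (poissonKernel 0 (Real.exp (-(τ * L))) (exp (β * I)) / (2 * τ)) := by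
  have hvc : Continuous v := continuous_iff_continuousAt.mpr fun t => (hv t).continuousAt
  have hK := integral_norm_greenFunDeriv_sq_add hL hτ (β := β)
  set K := poissonKernel 0 (Real.exp (-(τ * L))) (exp (β * I)) / (2 * τ)
  set H := ∫ t in (0:ℝ)..L, (‖v' t‖ ^ 2 + τ ^ 2 * ‖v t‖ ^ 2)
  have hH0 : 0 ≤ H := intervalIntegral.integral_nonneg hL.le fun t _ => by positivity
  have hK0 : 0 ≤ K := hK ▸ intervalIntegral.integral_nonneg hL.le fun t _ => by positivity
  suffices ‖v 0‖ ≤ √H * √K by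
    calc ‖v 0‖ ^ 2 ≤ (√H * √K) ^ 2 := pow_le_pow_left₀ (norm_nonneg _) this 2
      _ = H * K := by rw [mul_pow, sq_sqrt hH0, sq_sqrt hK0]
  refine le_sqrt_mul_sqrt_of_forall_pos hH0 hK0 fun r hr => ?_
  calc ‖v 0‖ = ‖∫ t in (0:ℝ)..L,
        (conj (v' t) * greenFunDeriv L τ β t + τ ^ 2 * (conj (v t) * greenFun L τ β t))‖ := by
        rw [integral_conj_mul_greenFunDeriv_add hL hτ hv hv' hvL, RCLike.norm_conj]
    _ ≤ ∫ t in (0:ℝ)..L, (r * (‖v' t‖ ^ 2 + τ ^ 2 * ‖v t‖ ^ 2) +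
          (‖greenFunDeriv L τ β t‖ ^ 2 + τ ^ 2 * ‖greenFun L τ β t‖ ^ 2) / r) / 2 :=
        intervalIntegral.norm_integral_le_of_norm_le hL.le
          (Eventually.of_forall fun t _ => norm_conj_mul_add_mul_le _ _ _ _ hr)
          (Continuous.intervalIntegrable (by fun_prop) _ _)
    _ = (r * H + K / r) / 2 := by
        rw [intervalIntegral.integral_div, intervalIntegral.integral_add,
          intervalIntegral.integral_const_mul, intervalIntegral.integral_div, hK]
        all_goals exact Continuous.intervalIntegrable (by fun_prop) _ _

lemma norm_sq_le_energy_mul_poissonKernel {v v' : ℝ → ℂ} (hv : ∀ t, HasDerivAt v (v' t) t)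
    (hv' : Continuous v') (hper : ∀ t, v (t + L) = exp (β * I) * v t) (x : ℝ) :
    ‖v x‖ ^ 2 ≤ (∫ t in (0:ℝ)..L, (‖v' t‖ ^ 2 + τ ^ 2 * ‖v t‖ ^ 2)) *
      (poissonKernel 0 (Real.exp (-(τ * L))) (exp (β * I)) / (2 * τ)) := by
  have hper' : ∀ t, v' (t + L) = exp (β * I) * v' t := fun t =>
    ((hv (t + L)).comp_add_const t L).unique (by rw [funext hper]; exact (hv t).const_mul _)
  have hperiodic : Function.Periodic (fun t => ‖v' t‖ ^ 2 + τ ^ 2 * ‖v t‖ ^ 2) L := fun t => by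
    simp only [hper, hper', norm_mul, norm_exp_ofReal_mul_I, one_mul]
  have h := norm_sq_zero_le_energy_mul_poissonKernel hL hτ (β := β) (v := fun t => v (x + t))
    (fun t => (hv (x + t)).comp_const_add x t) (by fun_prop) (by simp only [hper, add_zero])
  rwa [add_zero, intervalIntegral.integral_comp_add_left (fun t => ‖v' t‖ ^ 2 + τ ^ 2 * ‖v t‖ ^ 2),
    add_zero, hperiodic.intervalIntegral_add_eq x 0, zero_add] at h

end Green

section Gauge

open Complex

variable {a : ℝ → ℝ} {u : ℝ → ℂ}

noncomputable def gaugeTransform (a : ℝ → ℝ) (u : ℝ → ℂ) (t : ℝ) : ℂ :=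
  exp ((∫ s in (0:ℝ)..t, a s) * I) * u t

lemma norm_gaugeTransform (t : ℝ) : ‖gaugeTransform a u t‖ = ‖u t‖ := by
  rw [gaugeTransform, norm_mul, norm_exp_ofReal_mul_I, one_mul]

lemma continuous_gaugeTransform (ha : Continuous a) (hu : Continuous u) :
    Continuous (gaugeTransform a u) := by
  have := intervalIntegral.continuous_primitive (μ := volume)
    (fun _ _ => ha.intervalIntegrable _ _) 0
  unfold gaugeTransform
  fun_prop

lemma hasDerivAt_gaugeTransform (ha : Continuous a) {t : ℝ} (hu : DifferentiableAt ℝ u t) :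
    HasDerivAt (gaugeTransform a u)
      (-I * gaugeTransform a (fun s => I * deriv u s - a s * u s) t) t := by
  have hψ := ((ha.integral_hasStrictDerivAt 0 t).hasDerivAt.ofReal_comp.mul_const I).cexp
  refine (hψ.mul hu.hasDerivAt).congr_deriv ?_
  simp only [gaugeTransform]
  linear_combination (exp ((∫ s in (0:ℝ)..t, a s) * I) * deriv u t) * I_mul_I

lemma gaugeTransform_add_period {L : ℝ} (ha : Continuous a) (haP : Function.Periodic a L)
    (huP : Function.Periodic u L) (t : ℝ) :
    gaugeTransform a u (t + L) = exp ((∫ s in (0:ℝ)..L, a s) * I) * gaugeTransform a u t := by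
  rw [gaugeTransform, gaugeTransform, huP t, haP.intervalIntegral_add_eq_add 0 t
    (fun _ _ => ha.intervalIntegrable _ _), zero_add, ofReal_add, add_mul, Complex.exp_add]
  ring

lemma norm_sq_le_magnetic_energy_mul_poissonKernel {L τ : ℝ} (hL : 0 < L) (hτ : 0 < τ)
    (ha : Continuous a) (haP : Function.Periodic a L) (hu : ContDiff ℝ 1 u)
    (huP : Function.Periodic u L) (x : ℝ) :
    ‖u x‖ ^ 2 ≤ ((∫ t in (0:ℝ)..L, ‖I * deriv u t - a t * u t‖ ^ 2) +
        τ ^ 2 * ∫ t in (0:ℝ)..L, ‖u t‖ ^ 2) *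
      (poissonKernel 0 (Real.exp (-(τ * L))) (exp ((∫ t in (0:ℝ)..L, a t) * I)) / (2 * τ)) := by
  set w : ℝ → ℂ := fun t => I * deriv u t - a t * u t
  have hw : Continuous w := by
    have := hu.continuous_deriv le_rfl
    have := hu.continuous
    fun_prop
  have h := norm_sq_le_energy_mul_poissonKernel hL hτ
    (fun t => hasDerivAt_gaugeTransform ha (hu.differentiable one_ne_zero t))
    (continuous_const.mul (continuous_gaugeTransform ha hw))
    (gaugeTransform_add_period ha haP huP) x
  simp only [norm_mul, norm_neg, norm_I, one_mul, norm_gaugeTransform] at h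
  rwa [intervalIntegral.integral_add (Continuous.intervalIntegrable (by fun_prop) _ _)
    (Continuous.intervalIntegrable (by fun_prop) _ _), intervalIntegral.integral_const_mul] at h

end Gauge

/-- 1D magnetic interpolation inequality with sharp constant `k(α)`. -/
theorem magnetic_interpolation_inequality_1d
    (L : ℝ) (hL : 0 < L)
    (a : ℝ → ℝ) (ha : Continuous a) (haP : Function.Periodic a L)
    (α : ℝ) (hα : α = (1 / (2 * Real.pi)) * ∫ x in (0:ℝ)..L, a x)
    (hαZ : ∀ m : ℤ, α ≠ (m : ℝ))
    (u : ℝ → ℂ) (hu : ContDiff ℝ 1 u) (huP : Function.Periodic u L) :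
    (⨆ x : Set.Icc (0:ℝ) L, ‖u x.1‖) ^ 2 ≤
      kConst α *
        Real.sqrt (∫ x in (0:ℝ)..L, ‖Complex.I * deriv u x - (a x : ℂ) * u x‖ ^ 2) *
        Real.sqrt (∫ x in (0:ℝ)..L, ‖u x‖ ^ 2) := by
  set D := ∫ x in (0:ℝ)..L, ‖Complex.I * deriv u x - a x * u x‖ ^ 2
  set B := ∫ x in (0:ℝ)..L, ‖u x‖ ^ 2
  set k := kConst α
  have hk : 0 ≤ k := kConst_nonneg α
  have hflux : ∫ x in (0:ℝ)..L, a x = 2 * π * α := by rw [hα]; field_simp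
  have hD : 0 ≤ D := intervalIntegral.integral_nonneg hL.le fun _ _ => by positivity
  have hB : 0 ≤ B := intervalIntegral.integral_nonneg hL.le fun _ _ => by positivity
  have hbound x τ (hτ : 0 < τ) : ‖u x‖ ^ 2 ≤ (τ * (k * B) + k * D / τ) / 2 := by
    have h := norm_sq_le_magnetic_energy_mul_poissonKernel hL hτ ha haP hu huP x
    rw [hflux] at h
    calc ‖u x‖ ^ 2 ≤ (D + τ ^ 2 * B) * (k / (2 * τ)) := h.trans <| by
          gcongr
          exact poissonKernel_le_kConst hαZ (exp_pos _).le
      _ = (τ * (k * B) + k * D / τ) / 2 := by field_simp; ring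
  refine sq_iSup_le_of_forall_sq_le (fun _ => norm_nonneg _) (by positivity) fun x => ?_
  calc ‖u x‖ ^ 2 ≤ √(k * B) * √(k * D) :=
        le_sqrt_mul_sqrt_of_forall_pos (by positivity) (by positivity) (hbound x)
    _ = k * √D * √B := by
        rw [sqrt_mul hk, sqrt_mul hk, mul_mul_mul_comm, mul_self_sqrt hk, mul_assoc, mul_comm √B]
end

section
/- For every α ∈ ℝ, defining F(b, α) = b^{5/3} Σ_{k∈ℤ} (|k+α|³ + b)^{−2} for b > 0, one has lim_{b→∞} F(b, α) = 2∫₀^∞ dx/(x³+1)² = (8/27)√3 π. -/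
open MeasureTheory Real Filter

/-!
With `h = b ^ (-1/3)` one has `F(b, α) = ∑ₖ h g(h (k + α))` for `g x = (|x| ^ 3 + 1)⁻²`: a Riemann
sum of `g` over the shifted lattice `h (ℤ + α)`. It is the integral of the step function
`x ↦ g(h (⌊x / h⌋ + α))`, which samples `g` within distance `h (1 + |α|)` of `x`; since `g` varies
at most by a factor `16` over distances `≤ 1/2`, dominated convergence gives `F(b, α) → ∫ g` as
`b → ∞`. Finally `∫ g = 2 ∫₀^∞ (x ^ 3 + 1)⁻²` is evaluated through an explicit primitive.
-/

open Set Topology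

noncomputable section

def latticeSample (h α x : ℝ) : ℝ := h * (⌊x / h⌋ + α)

def latticeRiemannSum {E : Type*} [NormedAddCommGroup E] [NormedSpace ℝ E]
    (f : ℝ → E) (h α : ℝ) : E :=
  ∑' k : ℤ, h • f (h * (k + α))

section LatticeRiemannSum

variable {E : Type*} [NormedAddCommGroup E] [NormedSpace ℝ E] {h α : ℝ}

theorem measurable_latticeSample (h α : ℝ) : Measurable (latticeSample h α) :=
  ((measurable_from_top.comp (measurable_id.div_const h).floor).add_const α).const_mul h

theorem abs_latticeSample_sub_le (hh : 0 < h) (x : ℝ) :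
    |latticeSample h α x - x| ≤ h * (1 + |α|) := by
  have hfract : latticeSample h α x - x = h * α - h * Int.fract (x / h) := by
    rw [latticeSample, Int.fract, mul_sub, mul_div_cancel₀ x hh.ne']
    ring
  rw [hfract]
  calc |h * α - h * Int.fract (x / h)| ≤ |h * α| + |h * Int.fract (x / h)| := abs_sub _ _
    _ ≤ h * |α| + h := by
      rw [abs_mul, abs_mul, abs_of_pos hh, abs_of_nonneg (Int.fract_nonneg (x / h))]
      gcongr
      exact mul_le_of_le_one_right hh.le (Int.fract_lt_one _).le
    _ = h * (1 + |α|) := by ring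

theorem latticeSample_eq_of_mem_Ico (hh : 0 < h) {k : ℤ} {x : ℝ}
    (hx : x ∈ Ico (k • h) ((k + 1) • h)) : latticeSample h α x = h * (k + α) := by
  rw [zsmul_eq_mul, zsmul_eq_mul, mem_Ico, ← le_div_iff₀ hh, ← div_lt_iff₀ hh] at hx
  rw [latticeSample, Int.floor_eq_iff.mpr (by exact_mod_cast hx)]

theorem integral_comp_latticeSample [CompleteSpace E] {f : ℝ → E} (hh : 0 < h)
    (hf : Integrable fun x ↦ f (latticeSample h α x)) :
    ∫ x, f (latticeSample h α x) = latticeRiemannSum f h α := by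
  rw [← setIntegral_univ, ← iUnion_Ico_zsmul hh,
    integral_iUnion (fun _ ↦ measurableSet_Ico) (pairwise_disjoint_Ico_zsmul h) hf.integrableOn]
  refine tsum_congr fun k ↦ ?_
  rw [setIntegral_congr_fun measurableSet_Ico fun x hx ↦ by
      rw [latticeSample_eq_of_mem_Ico hh hx],
    setIntegral_const, volume_real_Ico, add_smul, one_smul, add_sub_cancel_left, max_eq_left hh.le]

theorem tendsto_latticeSample_nhdsGT_zero (α x : ℝ) :
    Tendsto (fun h ↦ latticeSample h α x) (𝓝[>] 0) (𝓝 x) := by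
  have hbound : Tendsto (fun h : ℝ ↦ h * (1 + |α|)) (𝓝[>] 0) (𝓝 0) :=
    ((continuous_mul_const _).tendsto' 0 0 (zero_mul _)).mono_left nhdsWithin_le_nhds
  refine tendsto_sub_nhds_zero_iff.mp (squeeze_zero_norm' ?_ hbound)
  filter_upwards [self_mem_nhdsWithin] with h hh
  exact abs_latticeSample_sub_le hh x

theorem tendsto_latticeRiemannSum [CompleteSpace E] {f : ℝ → E} {M : ℝ → ℝ} {δ : ℝ}
    (hf : Continuous f) (hM : Integrable M) (hδ : 0 < δ)
    (hfM : ∀ x y, |y - x| ≤ δ → ‖f y‖ ≤ M x) (α : ℝ) :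
    Tendsto (fun h ↦ latticeRiemannSum f h α) (𝓝[>] 0) (𝓝 (∫ x, f x)) := by
  have hsmall : ∀ᶠ h in 𝓝[>] 0, 0 < h ∧ h * (1 + |α|) ≤ δ := by
    filter_upwards [Ioo_mem_nhdsGT (by positivity : 0 < δ / (1 + |α|))] with h hh
    exact ⟨hh.1, (le_div_iff₀ (by positivity)).mp hh.2.le⟩
  have hmeas : ∀ h, AEStronglyMeasurable fun x ↦ f (latticeSample h α x) := fun h ↦
    hf.comp_aestronglyMeasurable (measurable_latticeSample h α).aestronglyMeasurable
  have hdom : ∀ᶠ h in 𝓝[>] 0, ∀ x, ‖f (latticeSample h α x)‖ ≤ M x :=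
    hsmall.mono fun h hh x ↦ hfM _ _ ((abs_latticeSample_sub_le hh.1 x).trans hh.2)
  have hint : ∀ᶠ h in 𝓝[>] 0, ∫ x, f (latticeSample h α x) = latticeRiemannSum f h α := by
    filter_upwards [hsmall, hdom] with h hh hhM
    exact integral_comp_latticeSample hh.1 (hM.mono' (hmeas h) (ae_of_all _ hhM))
  refine (tendsto_integral_filter_of_dominated_convergence M (.of_forall hmeas)
    (hdom.mono fun h hh ↦ ae_of_all _ hh) hM (ae_of_all _ fun x ↦ ?_)).congr' hint
  exact hf.continuousAt.tendsto.comp (tendsto_latticeSample_nhdsGT_zero α x)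

end LatticeRiemannSum

-- Partial fractions over `x ^ 3 + 1 = (x + 1) (x ^ 2 - x + 1)`.
def primitiveInvCubeAddOne (x : ℝ) : ℝ :=
  log (1 + x) / 3 - log (x ^ 2 - x + 1) / 6 + arctan ((2 * x - 1) / √3) / √3

-- Hermite reduction: `(x / (3 (x ^ 3 + 1)))' = ((x ^ 3 + 1) ^ 2)⁻¹ - (2 / 3) (x ^ 3 + 1)⁻¹`.
def primitiveInvSqCubeAddOne (x : ℝ) : ℝ :=
  x / (3 * (x ^ 3 + 1)) + 2 / 3 * primitiveInvCubeAddOne x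

theorem sq_sub_self_add_one_pos (x : ℝ) : 0 < x ^ 2 - x + 1 := by
  nlinarith [sq_nonneg (x - 1 / 2)]

theorem hasDerivAt_primitiveInvCubeAddOne {x : ℝ} (hx : -1 < x) :
    HasDerivAt primitiveInvCubeAddOne (x ^ 3 + 1)⁻¹ x := by
  have hq := sq_sub_self_add_one_pos x
  have hx1 : 0 < 1 + x := by linarith
  have hs : √3 ^ 2 = 3 := sq_sqrt (by norm_num)
  have hlog₁ := ((hasDerivAt_id' x).const_add 1).log hx1.ne'
  have hlog₂ := (((hasDerivAt_pow 2 x).sub (hasDerivAt_id' x)).add_const 1).log hq.ne'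
  have harctan := ((((hasDerivAt_id' x).const_mul 2).sub_const 1).div_const √3).arctan
  refine ((hlog₁.div_const 3).sub (hlog₂.div_const 6)).add (harctan.div_const √3)
    |>.congr_deriv ?_
  have hsqrt : 2 / √3 / √3 = 2 / 3 := by rw [div_div, ← sq, hs]
  have hden : 1 + (2 * x - 1) ^ 2 / 3 = 4 / 3 * (x ^ 2 - x + 1) := by ring
  rw [div_pow, hs]
  norm_num
  rw [mul_div_assoc, hsqrt, hden, show x ^ 3 + 1 = (1 + x) * (x ^ 2 - x + 1) by ring]
  generalize hqx : x ^ 2 - x + 1 = q at hq ⊢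
  field_simp
  rw [← hqx]
  ring

theorem hasDerivAt_primitiveInvSqCubeAddOne {x : ℝ} (hx : -1 < x) :
    HasDerivAt primitiveInvSqCubeAddOne ((x ^ 3 + 1) ^ 2)⁻¹ x := by
  have hc : 0 < x ^ 3 + 1 := by nlinarith [sq_sub_self_add_one_pos x]
  have hrat := (hasDerivAt_id' x).div (((hasDerivAt_pow 3 x).add_const 1).const_mul 3)
    (by positivity : 3 * (x ^ 3 + 1) ≠ 0)
  refine (hrat.add ((hasDerivAt_primitiveInvCubeAddOne hx).const_mul (2 / 3))).congr_deriv ?_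
  field_simp
  ring

theorem tendsto_primitiveInvCubeAddOne_atTop :
    Tendsto primitiveInvCubeAddOne atTop (𝓝 (π / (2 * √3))) := by
  have hratio : Tendsto (fun x : ℝ ↦ (1 + x) ^ 2 / (x ^ 2 - x + 1)) atTop (𝓝 1) := by
    have h0 : Tendsto (fun t : ℝ ↦ (t + 1) ^ 2 / (1 - t + t ^ 2)) (𝓝 0) (𝓝 1) := by
      have : ContinuousAt (fun t : ℝ ↦ (t + 1) ^ 2 / (1 - t + t ^ 2)) 0 := by
        fun_prop (disch := norm_num)
      simpa using this.tendsto
    refine (h0.comp tendsto_inv_atTop_zero).congr' ?_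
    filter_upwards [eventually_gt_atTop 0] with x hx
    rw [Function.comp_apply]
    field_simp
  have hlog : Tendsto (fun x : ℝ ↦ log (1 + x) / 3 - log (x ^ 2 - x + 1) / 6) atTop (𝓝 0) := by
    have h := ((continuousAt_log one_ne_zero).tendsto.comp hratio).div_const 6
    rw [log_one, zero_div] at h
    refine h.congr' ?_
    filter_upwards [eventually_gt_atTop 0] with x hx
    rw [Function.comp_apply, log_div (by positivity) (sq_sub_self_add_one_pos x).ne', log_pow]
    ring
  have harctan : Tendsto (fun x : ℝ ↦ arctan ((2 * x - 1) / √3) / √3) atTop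
      (𝓝 (π / 2 / √3)) := by
    refine ((tendsto_arctan_atTop.mono_right nhdsWithin_le_nhds).comp ?_).div_const _
    exact (tendsto_atTop_add_const_right _ _ (tendsto_id.const_mul_atTop two_pos)).atTop_div_const
      (by positivity)
  have h := hlog.add harctan
  rwa [zero_add, div_div] at h

theorem tendsto_primitiveInvSqCubeAddOne_atTop :
    Tendsto primitiveInvSqCubeAddOne atTop (𝓝 (π / (3 * √3))) := by
  have hrat : Tendsto (fun x : ℝ ↦ x / (3 * (x ^ 3 + 1))) atTop (𝓝 0) := by
    have h0 : Tendsto (fun t : ℝ ↦ t ^ 2 / (3 * (1 + t ^ 3))) (𝓝 0) (𝓝 0) := by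
      have : ContinuousAt (fun t : ℝ ↦ t ^ 2 / (3 * (1 + t ^ 3))) 0 := by
        fun_prop (disch := norm_num)
      simpa using this.tendsto
    refine (h0.comp tendsto_inv_atTop_zero).congr' ?_
    filter_upwards [eventually_gt_atTop 0] with x hx
    rw [Function.comp_apply]
    field_simp
  have h := hrat.add (tendsto_primitiveInvCubeAddOne_atTop.const_mul (2 / 3))
  rwa [show 0 + 2 / 3 * (π / (2 * √3)) = π / (3 * √3) by ring] at h

theorem primitiveInvCubeAddOne_zero : primitiveInvCubeAddOne 0 = -(π / (6 * √3)) := by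
  have harctan : arctan (√3)⁻¹ = π / 6 := by
    rw [inv_eq_one_div, ← tan_pi_div_six,
      arctan_tan (by linarith [pi_pos]) (by linarith [pi_pos])]
  simp [primitiveInvCubeAddOne, neg_div, harctan]
  ring

theorem integral_Ioi_inv_sq_cube_add_one :
    ∫ x in Ioi (0 : ℝ), ((x ^ 3 + 1) ^ 2)⁻¹ = 4 / 27 * √3 * π := by
  rw [integral_Ioi_of_hasDerivAt_of_nonneg' (fun x hx ↦ hasDerivAt_primitiveInvSqCubeAddOne
      (by linarith [mem_Ici.mp hx])) (fun x _ ↦ by positivity)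
      tendsto_primitiveInvSqCubeAddOne_atTop]
  have hs : √3 ^ 2 = 3 := sq_sqrt (by norm_num)
  simp [primitiveInvSqCubeAddOne, primitiveInvCubeAddOne_zero]
  field_simp
  rw [hs]
  ring

def Fprofile (x : ℝ) : ℝ := ((|x| ^ 3 + 1) ^ 2)⁻¹

theorem continuous_Fprofile : Continuous Fprofile :=
  Continuous.inv₀ (by fun_prop) fun x ↦ by positivity

theorem Fprofile_le_inv_one_add_sq (x : ℝ) : Fprofile x ≤ 2 * (1 + x ^ 2)⁻¹ := by
  have hx : 1 + x ^ 2 ≤ 2 * (|x| ^ 3 + 1) ^ 2 := by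
    rw [← sq_abs x]
    have hcubic : 0 ≤ (|x| - 1) ^ 2 * (2 * |x| + 1) := by positivity
    nlinarith [abs_nonneg x]
  calc Fprofile x ≤ ((1 + x ^ 2) / 2)⁻¹ := inv_anti₀ (by positivity) (by linarith)
    _ = 2 * (1 + x ^ 2)⁻¹ := by rw [inv_div, div_eq_mul_inv]

theorem integrable_Fprofile : Integrable Fprofile :=
  (integrable_inv_one_add_sq.const_mul 2).mono' continuous_Fprofile.aestronglyMeasurable
    (ae_of_all _ fun x ↦ by
      rw [Real.norm_of_nonneg (by unfold Fprofile; positivity)]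
      exact Fprofile_le_inv_one_add_sq x)

theorem Fprofile_le_of_abs_sub_le {x y : ℝ} (hxy : |y - x| ≤ 1 / 2) :
    ‖Fprofile y‖ ≤ 16 * Fprofile x := by
  have hxy' : |x| ≤ |y| + 1 / 2 := by
    have := abs_sub_abs_le_abs_sub x y
    rw [abs_sub_comm] at this
    linarith
  have hcube : |x| ^ 3 + 1 ≤ 4 * (|y| ^ 3 + 1) := by
    have := pow_le_pow_left₀ (abs_nonneg x) hxy' 3
    nlinarith [abs_nonneg y, sq_nonneg (|y| - 1 / 2)]
  rw [Real.norm_of_nonneg (by unfold Fprofile; positivity)]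
  have hsq := pow_le_pow_left₀ (by positivity) hcube 2
  calc Fprofile y ≤ ((|x| ^ 3 + 1) ^ 2 / 16)⁻¹ := inv_anti₀ (by positivity) (by nlinarith)
    _ = 16 * Fprofile x := by rw [inv_div, div_eq_mul_inv, Fprofile]

theorem Fsum_eq_latticeRiemannSum (α : ℝ) {b : ℝ} (hb : 0 < b) :
    Fsum α b = latticeRiemannSum Fprofile (b ^ (-(1 / 3 : ℝ))) α := by
  set h := b ^ (-(1 / 3 : ℝ))
  have hh : 0 < h := by positivity
  have hcube : h ^ 3 = b⁻¹ := by
    rw [← rpow_natCast, ← rpow_mul hb.le]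
    norm_num [rpow_neg_one]
  have hpow : b ^ ((5 : ℝ) / 3) = b ^ 2 * h := by
    rw [← rpow_natCast b 2, ← rpow_add hb]
    norm_num
  rw [Fsum, latticeRiemannSum, ← tsum_mul_left]
  refine tsum_congr fun k ↦ ?_
  rw [Fprofile, smul_eq_mul, abs_mul, abs_of_pos hh, mul_pow, hcube, hpow]
  field_simp

end

/-- `lim_{b→∞} F(b,α) = 2∫₀^∞ dx/(x³+1)² = (8/27)√3 π`. -/
theorem Fsum_limit_atTop (α : ℝ) :
    Filter.Tendsto (fun b : ℝ => Fsum α b) Filter.atTop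
      (nhds (8/27 * Real.sqrt 3 * Real.pi)) ∧
    2 * ∫ x in Set.Ioi (0:ℝ), ((x ^ 3 + 1) ^ 2)⁻¹ = 8/27 * Real.sqrt 3 * Real.pi := by
  have hvalue : 2 * ∫ x in Ioi (0 : ℝ), ((x ^ 3 + 1) ^ 2)⁻¹ = 8 / 27 * √3 * π := by
    rw [integral_Ioi_inv_sq_cube_add_one]
    ring
  have hscale : Tendsto (fun b : ℝ ↦ b ^ (-(1 / 3 : ℝ))) atTop (𝓝[>] 0) :=
    tendsto_nhdsWithin_iff.mpr ⟨tendsto_rpow_neg_atTop (by norm_num),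
      (eventually_gt_atTop 0).mono fun b hb ↦ rpow_pos_of_pos hb _⟩
  have hsum := (tendsto_latticeRiemannSum continuous_Fprofile (integrable_Fprofile.const_mul 16)
    one_half_pos (fun _ _ ↦ Fprofile_le_of_abs_sub_le) α).comp hscale
  have hint : ∫ x, Fprofile x = 2 * ∫ x in Ioi (0 : ℝ), ((x ^ 3 + 1) ^ 2)⁻¹ :=
    integral_comp_abs (f := fun x ↦ ((x ^ 3 + 1) ^ 2)⁻¹)
  rw [hint, hvalue] at hsum
  refine ⟨hsum.congr' ?_, hvalue⟩
  filter_upwards [eventually_gt_atTop 0] with b hb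
  exact (Fsum_eq_latticeRiemannSum α hb).symm
end

section
/- For every b > 0, F(b, 1/2) = F(b/8, 1/4), where F(b, α) = b^{5/3} Σ_{k∈ℤ} (|k+α|³ + b)^{−2}. In particular sup_{b≥0} F(b,1/2) = sup_{b≥0} F(b,1/4), hence K₂(1/2) = K₂(1/4) where K₂(α) = (5/(3√3π))·[sup_{b≥0} F(b,α)]². -/
open MeasureTheory Real Filter

/-- auxiliary function `h(m) = (|m|³+c)^{-2}` on the integers -/
noncomputable def auxh (c : ℝ) (m : ℤ) : ℝ := ((|(m:ℝ)| ^ 3 + c) ^ 2)⁻¹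

lemma auxh_neg (c : ℝ) (m : ℤ) : auxh c (-m) = auxh c m := by
  simp [auxh]

/-- a comparison summability lemma -/
lemma summable_aux {c α : ℝ} (hc : 0 < c) (hα : ∀ k : ℤ, (k:ℝ) + α ≠ 0) (f : ℤ → ℝ)
    (hf : ∀ k : ℤ, |(k:ℝ) + α| ≤ |f k|) :
    Summable (fun k : ℤ => ((|f k| ^ 3 + c) ^ 2)⁻¹) := by
  have hmaj : Summable (fun k : ℤ => (2*c)⁻¹ * (1 / |(k:ℝ) + α| ^ (3:ℝ))) :=
    ((Real.summable_one_div_int_add_rpow α 3).2 (by norm_num)).mul_left _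
  refine Summable.of_nonneg_of_le (fun k => by positivity) (fun k => ?_) hmaj
  have hy : 0 < |(k:ℝ) + α| := abs_pos.2 (hα k)
  have h1 : |(k:ℝ) + α| ^ (3:ℝ) = |(k:ℝ) + α| ^ (3:ℕ) := by
    rw [show (3:ℝ) = ((3:ℕ):ℝ) by norm_num, Real.rpow_natCast]
  have hyf : |(k:ℝ) + α| ^ 3 ≤ |f k| ^ 3 := by
    exact pow_le_pow_left₀ hy.le (hf k) 3
  have hy3 : 0 < |(k:ℝ) + α| ^ 3 := by positivity
  rw [h1, mul_one_div, div_eq_mul_inv, ← mul_inv]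
  apply inv_anti₀
  · positivity
  · nlinarith [sq_nonneg (|f k| ^ 3 - c), abs_nonneg (f k)]

lemma summable_auxh_four_one {c : ℝ} (hc : 0 < c) :
    Summable (fun j : ℤ => auxh c (4*j+1)) := by
  have := summable_aux (α := 1/4) hc
    (fun k => by
      intro hk
      have h1 : ((4*k+1 : ℤ):ℝ) ≠ 0 := Int.cast_ne_zero.2 (by omega)
      apply h1; push_cast; linarith)
    (fun j => ((4*j+1 : ℤ):ℝ))
    (fun k => by
      push_cast
      rw [show (4*(k:ℝ)+1) = 4*((k:ℝ)+1/4) by ring, abs_mul]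
      have := abs_nonneg ((k:ℝ)+1/4)
      rw [show |(4:ℝ)| = 4 by norm_num]
      linarith)
  simpa [auxh] using this

lemma summable_auxh_four_three {c : ℝ} (hc : 0 < c) :
    Summable (fun j : ℤ => auxh c (4*j+3)) := by
  have := summable_aux (α := 3/4) hc
    (fun k => by
      intro hk
      have h1 : ((4*k+3 : ℤ):ℝ) ≠ 0 := Int.cast_ne_zero.2 (by omega)
      apply h1; push_cast; linarith)
    (fun j => ((4*j+3 : ℤ):ℝ))
    (fun k => by
      push_cast
      rw [show (4*(k:ℝ)+3) = 4*((k:ℝ)+3/4) by ring, abs_mul]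
      have := abs_nonneg ((k:ℝ)+3/4)
      rw [show |(4:ℝ)| = 4 by norm_num]
      linarith)
  simpa [auxh] using this

lemma tsum_auxh_four_three {c : ℝ} :
    ∑' j : ℤ, auxh c (4*j+3) = ∑' j : ℤ, auxh c (4*j+1) := by
  calc ∑' j : ℤ, auxh c (4*j+3)
      = ∑' j : ℤ, auxh c (4*(Equiv.subLeft (-1 : ℤ) j)+1) := by
        apply tsum_congr
        intro j
        rw [show (4*(Equiv.subLeft (-1 : ℤ) j)+1 : ℤ) = -(4*j+3) by
          simp [Equiv.subLeft]; ring, auxh_neg]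
    _ = ∑' j : ℤ, auxh c (4*j+1) := by simpa using (Equiv.subLeft (-1 : ℤ)).tsum_eq (fun j : ℤ => auxh c (4*j+1))

lemma tsum_auxh_odd {c : ℝ} (hc : 0 < c) :
    ∑' k : ℤ, auxh c (2*k+1) = 2 * ∑' j : ℤ, auxh c (4*j+1) := by
  have he1 : Function.Injective (fun j : ℤ => 2*j) := fun a b hab => by simp only at hab; omega
  have he2 : Function.Injective (fun j : ℤ => 2*j+1) := fun a b hab => by simp only at hab; omega
  set F1 : ℤ → ℝ := Function.extend (fun j : ℤ => 2*j) (fun j => auxh c (4*j+1)) 0 with hF1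
  set F2 : ℤ → ℝ := Function.extend (fun j : ℤ => 2*j+1) (fun j => auxh c (4*j+3)) 0 with hF2
  have HF1 : HasSum F1 (∑' j : ℤ, auxh c (4*j+1)) :=
    (hasSum_extend_zero he1).2 (summable_auxh_four_one hc).hasSum
  have HF2 : HasSum F2 (∑' j : ℤ, auxh c (4*j+3)) :=
    (hasSum_extend_zero he2).2 (summable_auxh_four_three hc).hasSum
  have key : ∀ k : ℤ, F1 k + F2 k = auxh c (2*k+1) := by
    intro k
    rcases Int.even_or_odd k with ⟨j, hj⟩ | ⟨j, hj⟩
    · have h1 : F1 k = auxh c (4*j+1) := by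
        rw [show k = (fun j : ℤ => 2*j) j from by simpa using by omega]
        exact he1.extend_apply _ _ j
      have h2 : F2 k = 0 := by
        rw [hF2, Function.extend_apply' _ _ _ (by rintro ⟨a, ha⟩; omega)]
        rfl
      rw [h1, h2, add_zero, show (2*k+1 : ℤ) = 4*j+1 by omega]
    · have h1 : F1 k = 0 := by
        rw [hF1, Function.extend_apply' _ _ _ (by rintro ⟨a, ha⟩; omega)]
        rfl
      have h2 : F2 k = auxh c (4*j+3) := by
        rw [show k = (fun j : ℤ => 2*j+1) j from by simpa using hj]
        exact he2.extend_apply _ _ j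
      rw [h1, h2, zero_add, show (2*k+1 : ℤ) = 4*j+3 by omega]
  have Hg : HasSum (fun k : ℤ => auxh c (2*k+1))
      ((∑' j : ℤ, auxh c (4*j+1)) + ∑' j : ℤ, auxh c (4*j+3)) := by
    have := HF1.add HF2
    rwa [show (fun k : ℤ => F1 k + F2 k) = fun k : ℤ => auxh c (2*k+1) from funext key] at this
  rw [Hg.tsum_eq, tsum_auxh_four_three]
  ring

lemma Fsum_half_eq (b : ℝ) (hb : 0 < b) : Fsum (1/2) b = Fsum (1/4) (b/8) := by
  have hc : (0:ℝ) < 8*b := by positivity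
  have half_term : ∀ k : ℤ, ((|(k:ℝ) + 1/2| ^ 3 + b) ^ 2)⁻¹ = 64 * auxh (8*b) (2*k+1) := by
    intro k
    have e1 : ((2*k+1 : ℤ):ℝ) = 2*((k:ℝ)+1/2) := by push_cast; ring
    rw [auxh, e1, abs_mul, show |(2:ℝ)| = 2 by norm_num,
      show (2*|(k:ℝ)+1/2|)^3 + 8*b = 8*(|(k:ℝ)+1/2|^3 + b) by ring,
      show (8*(|(k:ℝ)+1/2|^3 + b))^2 = 64*(|(k:ℝ)+1/2|^3 + b)^2 by ring,
      mul_inv, ← mul_assoc]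
    norm_num
  have quarter_term : ∀ k : ℤ,
      ((|(k:ℝ) + 1/4| ^ 3 + b/8) ^ 2)⁻¹ = 4096 * auxh (8*b) (4*k+1) := by
    intro k
    have e1 : ((4*k+1 : ℤ):ℝ) = 4*((k:ℝ)+1/4) := by push_cast; ring
    rw [auxh, e1, abs_mul, show |(4:ℝ)| = 4 by norm_num,
      show (4*|(k:ℝ)+1/4|)^3 + 8*b = 64*(|(k:ℝ)+1/4|^3 + b/8) by ring,
      show (64*(|(k:ℝ)+1/4|^3 + b/8))^2 = 4096*(|(k:ℝ)+1/4|^3 + b/8)^2 by ring,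
      mul_inv, ← mul_assoc]
    norm_num
  have hpow : (b/8) ^ ((5:ℝ)/3) = b ^ ((5:ℝ)/3) / 32 := by
    rw [div_rpow hb.le (by norm_num : (0:ℝ) ≤ 8)]
    congr 1
    rw [show (8:ℝ) = 2 ^ (3:ℝ) by
        rw [show (3:ℝ) = ((3:ℕ):ℝ) by norm_num, Real.rpow_natCast]; norm_num,
      ← Real.rpow_mul (by norm_num), show (3:ℝ)*(5/3) = ((5:ℕ):ℝ) by norm_num,
      Real.rpow_natCast]
    norm_num
  rw [Fsum, Fsum, tsum_congr half_term, tsum_congr quarter_term,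
    tsum_mul_left, tsum_mul_left, tsum_auxh_odd hc, hpow]
  ring

lemma Fsum_zero (α : ℝ) : Fsum α 0 = 0 := by
  rw [Fsum, Real.zero_rpow (by norm_num), zero_mul]

/-- `F(b,1/2) = F(b/8,1/4)` for all `b > 0`, hence
`sup_{b≥0}F(b,1/2) = sup_{b≥0}F(b,1/4)` and `K₂(1/2) = K₂(1/4)`. -/
theorem Fsum_half_eq_quarter :
    (∀ b : ℝ, 0 < b → Fsum (1/2) b = Fsum (1/4) (b/8)) ∧
    supF (1/2) = supF (1/4) ∧
    K2 (1/2) = K2 (1/4) := by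
  have hall : ∀ b : ℝ, 0 ≤ b → Fsum (1/2) b = Fsum (1/4) (b/8) := by
    intro b hb
    rcases hb.lt_or_eq with hb' | hb'
    · exact Fsum_half_eq b hb'
    · rw [← hb', Fsum_zero, show (0:ℝ)/8 = 0 by norm_num, Fsum_zero]
  have hsup : supF (1/2) = supF (1/4) := by
    rw [supF, supF, iSup, iSup]
    congr 1
    ext x
    constructor
    · rintro ⟨⟨b, hb⟩, rfl⟩
      exact ⟨⟨b/8, by positivity⟩, (hall b hb).symm⟩
    · rintro ⟨⟨b, hb⟩, rfl⟩
      refine ⟨⟨8*b, by positivity⟩, ?_⟩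
      simp only
      rw [hall (8*b) (by positivity)]
      norm_num
  exact ⟨Fsum_half_eq, hsup, by rw [K2, K2, hsup]⟩
end
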